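/- For every integer d ≥ 0 and every configuration b : {0,…,L} → {−1,0,1}, the coefficient of the tensor basis vector c_b := u_{b(0)} ⊗ u_{b(1)} ⊗ ⋯ ⊗ u_{b(L)} in the expansion of F_tot^d Ω is 0 if d(b) ≠ d, and equals q^{−d(d−1)} [d]_{q²}! · G(b) if d(b) = d, where G(b) := [ ∏_{j=1}^{d(1)} Q q^{L + x_j − N→^1_{x_j}(b)} ] · ζ_0 · [ ∏_{i=1}^{d(−1)} q^{L − y_i − N→^1_{y_i}(b)} ], with ζ_0 := Q q^{L − d(1)} if b(0) = 1, ζ_0 := 1 if b(0) = 0, and ζ_0 := q^{L − d(1)} if b(0) = −1. -/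

import Mathlib

open Matrix BigOperators Finset

noncomputable section

namespace Stmt7

/-- Index of the tensor basis of `W = V^{⊗(L+1)}`, where `V = ℝ³` has ordered basis
`(u₋₁, u₀, u₁)` encoded as `Fin 3` (`0 ↦ u₋₁`, `1 ↦ u₀`, `2 ↦ u₁`); tensor factors
are indexed by the sites `0,1,…,L`. -/
abbrev Conf (L : ℕ) := Fin (L + 1) → Fin 3

/-- The matrix `E`: `E u₀ = u₋₁`, `E u₋₁ = E u₁ = 0`. -/
def Emat : Matrix (Fin 3) (Fin 3) ℝ := fun a b => if a = 0 ∧ b = 1 then 1 else 0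

/-- The matrix `F`: `F u₀ = u₁`, `F u₋₁ = F u₁ = 0`. -/
def Fmat : Matrix (Fin 3) (Fin 3) ℝ := fun a b => if a = 2 ∧ b = 1 then 1 else 0

/-- `K = diag(q, q⁻¹, 1)` (entries in the order `u₋₁, u₀, u₁`). -/
def Kmat (q : ℝ) : Matrix (Fin 3) (Fin 3) ℝ := Matrix.diagonal ![q, q⁻¹, 1]

/-- `k = diag(q⁻¹, q², q⁻¹)` (entries in the order `u₋₁, u₀, u₁`). -/
def kmat (q : ℝ) : Matrix (Fin 3) (Fin 3) ℝ := Matrix.diagonal ![q⁻¹, q ^ 2, q⁻¹]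

/-- `f = E + Q·F`. -/
def fmat (Q : ℝ) : Matrix (Fin 3) (Fin 3) ℝ := Emat + Q • Fmat

/-- `a₀ = f ⊗ (K⁻¹)^{⊗L}` as a matrix in the tensor basis of `W`. -/
def a0 (L : ℕ) (q Q : ℝ) : Matrix (Conf L) (Conf L) ℝ :=
  fun b b' => ∏ s : Fin (L + 1),
    (if s = 0 then fmat Q (b s) (b' s) else (Kmat q)⁻¹ (b s) (b' s))

/-- `a_j⁺ = Id^{⊗j} ⊗ E ⊗ (K⁻¹)^{⊗(L−j)}` (the `E` factor at site `j`). -/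
def aP (L : ℕ) (q : ℝ) (j : ℕ) : Matrix (Conf L) (Conf L) ℝ :=
  fun b b' => ∏ s : Fin (L + 1),
    (if (s : ℕ) < j then (if b s = b' s then (1 : ℝ) else 0)
     else if (s : ℕ) = j then Emat (b s) (b' s)
     else (Kmat q)⁻¹ (b s) (b' s))

/-- `a_j⁻ = Q · k^{⊗j} ⊗ F ⊗ (K⁻¹)^{⊗(L−j)}` (the `F` factor at site `j`). -/
def aM (L : ℕ) (q Q : ℝ) (j : ℕ) : Matrix (Conf L) (Conf L) ℝ :=
  fun b b' => Q * ∏ s : Fin (L + 1),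
    (if (s : ℕ) < j then kmat q (b s) (b' s)
     else if (s : ℕ) = j then Fmat (b s) (b' s)
     else (Kmat q)⁻¹ (b s) (b' s))


/-- The `q²`-deformed integer `[n]_{q²} = (1 − q^{2n})/(1 − q²)`. -/
def qInt (q : ℝ) (n : ℕ) : ℝ := (1 - q ^ (2 * n)) / (1 - q ^ 2)

/-- The `q²`-deformed factorial `[d]_{q²}! = [1]_{q²} ⋯ [d]_{q²}`, with `[0]_{q²}! = 1`. -/
def qFact (q : ℝ) : ℕ → ℝ
  | 0 => 1
  | n + 1 => qFact q n * qInt q (n + 1)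

/-- `F_tot = a₀ + Σ_{y=1}^{L} a_y⁺ + Σ_{x=1}^{L} a_x⁻`. -/
def Ftot (L : ℕ) (q Q : ℝ) : Matrix (Conf L) (Conf L) ℝ :=
  a0 L q Q + ∑ y ∈ Finset.Icc 1 L, aP L q y + ∑ x ∈ Finset.Icc 1 L, aM L q Q x

/-- The vector `Ω = u₀^{⊗(L+1)}`, i.e. the tensor basis vector of the configuration
with every site equal to `u₀`. -/
def Omega (L : ℕ) : Conf L → ℝ := fun b => if b = fun _ => 1 then 1 else 0


/-- `N→¹_x(b)`: the number of sites strictly to the right of `x` whose `b`-value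
is `1` (encoded as `2`). -/
def Nr1 (L : ℕ) (b : Conf L) (x : Fin (L + 1)) : ℕ :=
  (Finset.univ.filter (fun y : Fin (L + 1) => x < y ∧ b y = 2)).card

/-- `d(1)`: the number of sites in `{1,…,L}` with `b`-value `1` (encoded as `2`). -/
def d1 (L : ℕ) (b : Conf L) : ℕ :=
  (Finset.univ.filter (fun x : Fin (L + 1) => 0 < (x : ℕ) ∧ b x = 2)).card

/-- `d(b)`: the total number of sites with nonzero `b`-value (value `≠ u₀`). -/
def dtot (L : ℕ) (b : Conf L) : ℕ :=
  (Finset.univ.filter (fun s : Fin (L + 1) => b s ≠ 1)).card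

/-- `ζ₀ = Q q^{L−d(1)}`, `1`, or `q^{L−d(1)}` according as `b(0) = 1`, `0`, or `−1`. -/
def zeta0 (L : ℕ) (q Q : ℝ) (b : Conf L) : ℝ :=
  if b 0 = 2 then Q * q ^ ((L : ℤ) - (d1 L b : ℤ))
  else if b 0 = 1 then 1
  else q ^ ((L : ℤ) - (d1 L b : ℤ))

/-- `G(b) = [∏_{j=1}^{d(1)} Q q^{L+x_j−N→¹_{x_j}(b)}] ζ₀ [∏_{i=1}^{d(−1)} q^{L−y_i−N→¹_{y_i}(b)}]`,
where `x_1 < ⋯ < x_{d(1)}` are the sites in `{1,…,L}` with `b`-value `1` and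
`y_1 < ⋯ < y_{d(−1)}` those with `b`-value `−1`. -/
def Gfun (L : ℕ) (q Q : ℝ) (b : Conf L) : ℝ :=
  (∏ x ∈ Finset.univ.filter (fun x : Fin (L + 1) => 0 < (x : ℕ) ∧ b x = 2),
      Q * q ^ ((L : ℤ) + ((x : ℕ) : ℤ) - (Nr1 L b x : ℤ))) *
    zeta0 L q Q b *
    (∏ y ∈ Finset.univ.filter (fun y : Fin (L + 1) => 0 < (y : ℕ) ∧ b y = 0),
      q ^ ((L : ℤ) - ((y : ℕ) : ℤ) - (Nr1 L b y : ℤ)))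


/-!
Applying `F_tot` to a vector `w` gives
`(F_tot w)(b) = ∑ⱼ hopCoeff b j · w(b with site j reset to u₀)`, since every summand of `F_tot`
is a Kronecker product of diagonal matrices and one factor `E`, `F` or `f` that only sees the
column of `u₀`. So `F_tot^d Ω` is computed by induction on `d`, one application of `F_tot` at a
time.

`G(b)` is a product of site weights, and resetting a nonzero site `j` changes it by an explicit
factor; the amplitude `hopCoeff b j` is that factor times `q^{-2 eⱼ}`, where
`eⱼ = #(hopSet b j)`. The hop sets of the nonzero sites form a strict chain, so `j ↦ eⱼ` is a
bijection from the `d` nonzero sites onto `{0, …, d-1}`, and the geometric sum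
`∑_{i<d} q^{-2i} = q^{-2(d-1)} [d]_{q²}` turns `q^{-(d-1)(d-2)} [d-1]_{q²}!` into
`q^{-d(d-1)} [d]_{q²}!`.
-/

section KroneckerPi

variable {ι α R : Type*} [Fintype ι] [DecidableEq ι] [Fintype α] [CommSemiring R]

def kroneckerPi (M : ι → Matrix α α R) : Matrix (ι → α) (ι → α) R :=
  fun b b' => ∏ s, M s (b s) (b' s)

theorem kroneckerPi_mulVec_apply {M : ι → Matrix α α R} {j : ι} {c : α}
    (hdiag : ∀ s ≠ j, (M s).IsDiag) (hcol : ∀ a a', a' ≠ c → M j a a' = 0)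
    (w : (ι → α) → R) (b : ι → α) :
    (kroneckerPi M *ᵥ w) b =
      M j (b j) c * (∏ s ∈ univ.erase j, M s (b s) (b s)) * w (Function.update b j c) := by
  rw [mulVec, dotProduct, sum_eq_single (Function.update b j c)]
  · rw [kroneckerPi, ← mul_prod_erase _ _ (mem_univ j), Function.update_self]
    congr 2
    exact prod_congr rfl fun s hs => by rw [Function.update_of_ne (ne_of_mem_erase hs)]
  · intro b' _ hb'
    obtain ⟨s, hs⟩ := Function.ne_iff.mp hb'
    refine mul_eq_zero_of_left (prod_eq_zero (mem_univ s) ?_) _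
    by_cases hsj : s = j
    · subst hsj
      exact hcol _ _ (by simpa using hs)
    · rw [Function.update_of_ne hsj] at hs
      exact hdiag s hsj (Ne.symm hs)
  · exact fun h => absurd (mem_univ _) h

end KroneckerPi

section OrderedKroneckerPi

variable {ι α R : Type*} [Fintype ι] [LinearOrder ι] [LocallyFiniteOrderBot ι]
    [LocallyFiniteOrderTop ι] [Fintype α] [CommSemiring R]

theorem prod_erase_ite_lt {M : Type*} [CommMonoid M] (j : ι) (f g : ι → M) :
    ∏ s ∈ univ.erase j, (if s < j then f s else g s) = (∏ s ∈ Iio j, f s) * ∏ s ∈ Ioi j, g s := by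
  rw [prod_ite]
  congr 2 <;> ext s <;> simp only [mem_filter, mem_erase, mem_univ, mem_Iio, mem_Ioi]
  · exact ⟨fun h => h.2, fun h => ⟨⟨h.ne, trivial⟩, h⟩⟩
  · exact ⟨fun h => lt_of_le_of_ne (not_lt.mp h.2) h.1.1.symm,
      fun h => ⟨⟨h.ne', trivial⟩, h.not_gt⟩⟩

theorem kroneckerPi_ite_mulVec_apply {A B C : Matrix α α R} {c : α} (hA : A.IsDiag) (hC : C.IsDiag)
    (hB : ∀ a a', a' ≠ c → B a a' = 0) (j : ι) (w : (ι → α) → R) (b : ι → α) :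
    (kroneckerPi (fun s => if s < j then A else if s = j then B else C) *ᵥ w) b =
      B (b j) c * (∏ s ∈ Iio j, A (b s) (b s)) * (∏ s ∈ Ioi j, C (b s) (b s)) *
        w (Function.update b j c) := by
  have hoff : ∀ s ≠ j, (if s < j then A else if s = j then B else C) = if s < j then A else C :=
    fun s hs => by rw [if_neg hs]
  rw [kroneckerPi_mulVec_apply (j := j) (c := c)
      (fun s hs => by rw [hoff s hs]; split_ifs; exacts [hA, hC])
      (fun a a' ha' => by simpa using hB a a' ha'),
    prod_congr rfl (g := fun s => if s < j then A (b s) (b s) else C (b s) (b s))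
      fun s hs => by rw [hoff s (ne_of_mem_erase hs)]; split_ifs <;> rfl,
    prod_erase_ite_lt]
  simp only [lt_irrefl, if_false, if_true, mul_assoc]

end OrderedKroneckerPi

theorem sum_comp_fin_three {ι M : Type*} [AddCommMonoid M] (S : Finset ι) (g : ι → Fin 3)
    (f : Fin 3 → M) :
    ∑ s ∈ S, f (g s) =
      #{s ∈ S | g s = 0} • f 0 + #{s ∈ S | g s = 1} • f 1 + #{s ∈ S | g s = 2} • f 2 := by
  rw [← sum_fiberwise' S g f, Fin.sum_univ_three]
  simp only [sum_const]

theorem card_eq_add_card_filter_fin_three {ι : Type*} (S : Finset ι) (g : ι → Fin 3) :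
    #S = #{s ∈ S | g s = 0} + #{s ∈ S | g s = 1} + #{s ∈ S | g s = 2} := by
  simpa using sum_comp_fin_three S g fun _ => (1 : ℕ)

theorem prod_zpow_eq_zpow_sum {ι G₀ : Type*} [CommGroupWithZero G₀] {a : G₀} (ha : a ≠ 0)
    (S : Finset ι) (f : ι → ℤ) : ∏ i ∈ S, a ^ f i = a ^ ∑ i ∈ S, f i := by
  induction S using Finset.cons_induction with
  | empty => simp
  | cons i S hi ih => rw [prod_cons, sum_cons, zpow_add₀ ha, ih]

section SiteOperators

variable {L : ℕ} {q Q : ℝ}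

theorem isDiag_Kmat_inv (q : ℝ) : ((Kmat q)⁻¹).IsDiag := by
  rw [Kmat, inv_diagonal]
  exact isDiag_diagonal _

theorem Kmat_inv_apply_self (hq : q ≠ 0) (a : Fin 3) :
    (Kmat q)⁻¹ a a = q ^ (![-1, 1, 0] a : ℤ) := by
  have hinv : (Kmat q)⁻¹ = diagonal ![q⁻¹, q, 1] := by
    refine inv_eq_right_inv ?_
    rw [Kmat, diagonal_mul_diagonal, ← diagonal_one]
    congr 1
    ext a
    fin_cases a <;> simp [hq]
  rw [hinv, diagonal_apply_eq]
  fin_cases a <;> simp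

theorem kmat_apply_self (a : Fin 3) : kmat q a a = q ^ (![-1, 2, -1] a : ℤ) := by
  rw [kmat, diagonal_apply_eq]
  fin_cases a <;> simp

theorem a0_mulVec_apply (w : Conf L → ℝ) (b : Conf L) :
    (a0 L q Q *ᵥ w) b =
      fmat Q (b 0) 1 * (∏ s ∈ Ioi 0, (Kmat q)⁻¹ (b s) (b s)) * w (Function.update b 0 1) := by
  have ha0 : a0 L q Q =
      kroneckerPi fun s => if s < 0 then 1 else if s = 0 then fmat Q else (Kmat q)⁻¹ := by
    ext b b'
    refine prod_congr rfl fun s _ => ?_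
    simp only [Fin.not_lt_zero, if_false]
    split_ifs <;> rfl
  rw [ha0, kroneckerPi_ite_mulVec_apply (c := 1) isDiag_one (isDiag_Kmat_inv q)
    fun a a' ha' => by simp [fmat, Emat, Fmat, ha']]
  simp

theorem aP_mulVec_apply (j : Fin (L + 1)) (w : Conf L → ℝ) (b : Conf L) :
    (aP L q j *ᵥ w) b =
      Emat (b j) 1 * (∏ s ∈ Ioi j, (Kmat q)⁻¹ (b s) (b s)) * w (Function.update b j 1) := by
  have haP : aP L q j =
      kroneckerPi fun s => if s < j then 1 else if s = j then Emat else (Kmat q)⁻¹ := by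
    ext b b'
    refine prod_congr rfl fun s _ => ?_
    simp only [Fin.val_fin_lt, Fin.val_inj]
    split_ifs <;> simp_all [one_apply]
  rw [haP, kroneckerPi_ite_mulVec_apply (c := 1) isDiag_one (isDiag_Kmat_inv q)
    fun a a' ha' => by simp [Emat, ha']]
  simp

theorem aM_mulVec_apply (j : Fin (L + 1)) (w : Conf L → ℝ) (b : Conf L) :
    (aM L q Q j *ᵥ w) b =
      Q * Fmat (b j) 1 * (∏ s ∈ Iio j, kmat q (b s) (b s)) *
        (∏ s ∈ Ioi j, (Kmat q)⁻¹ (b s) (b s)) * w (Function.update b j 1) := by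
  have haM : aM L q Q j =
      Q • kroneckerPi fun s => if s < j then kmat q else if s = j then Fmat else (Kmat q)⁻¹ := by
    ext b b'
    rw [Matrix.smul_apply, smul_eq_mul, aM, kroneckerPi]
    congr 1
    refine prod_congr rfl fun s _ => ?_
    simp only [Fin.val_fin_lt, Fin.val_inj]
    split_ifs <;> rfl
  rw [haM, smul_mulVec, Pi.smul_apply, smul_eq_mul,
    kroneckerPi_ite_mulVec_apply (A := kmat q) (c := 1) (isDiag_diagonal _) (isDiag_Kmat_inv q)
      fun a a' ha' => by simp [Fmat, ha']]
  ring

def hopCoeff (L : ℕ) (q Q : ℝ) (b : Conf L) (j : Fin (L + 1)) : ℝ :=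
  (Emat (b j) 1 + Q * Fmat (b j) 1 * ∏ s ∈ Iio j, kmat q (b s) (b s)) *
    ∏ s ∈ Ioi j, (Kmat q)⁻¹ (b s) (b s)

theorem Ftot_mulVec_apply (w : Conf L → ℝ) (b : Conf L) :
    (Ftot L q Q *ᵥ w) b = ∑ j, hopCoeff L q Q b j * w (Function.update b j 1) := by
  have hIcc : ∀ f : ℕ → ℝ, ∑ y ∈ Icc 1 L, f y = ∑ i : Fin L, f (i + 1) := fun f => by
    rw [← Ico_add_one_right_eq_Icc, sum_Ico_eq_sum_range, ← Finset.sum_range (fun i => f (i + 1))]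
    simp [add_comm]
  simp only [Ftot, add_mulVec, sum_mulVec, Pi.add_apply, Finset.sum_apply, hIcc]
  rw [Fin.sum_univ_succ, a0_mulVec_apply, add_assoc, ← Finset.sum_add_distrib]
  congr 1
  · have hIio : Iio (0 : Fin (L + 1)) = ∅ := by ext s; simp
    simp [hopCoeff, fmat, hIio]
  · refine Finset.sum_congr rfl fun i _ => ?_
    rw [← Fin.val_succ, aP_mulVec_apply, aM_mulVec_apply, hopCoeff]
    ring

end SiteOperators

section Weights

variable {L : ℕ} {q Q : ℝ}

def siteWeight (L : ℕ) (q Q : ℝ) (b : Conf L) (s : Fin (L + 1)) : ℝ :=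
  if b s = 2 then Q * q ^ ((L : ℤ) + (s : ℕ) - Nr1 L b s)
  else if b s = 0 then q ^ ((L : ℤ) - (s : ℕ) - Nr1 L b s)
  else 1

theorem Nr1_zero (b : Conf L) : Nr1 L b 0 = d1 L b := by
  simp only [Nr1, d1, Fin.lt_def, Fin.val_zero]

/-- `ζ₀` is the weight of site `0`, because `N→¹_0(b) = d(1)`. -/
theorem Gfun_eq_prod_siteWeight (b : Conf L) : Gfun L q Q b = ∏ s, siteWeight L q Q b s := by
  rw [Gfun, prod_filter, prod_filter, mul_right_comm, ← prod_mul_distrib, Fin.prod_univ_succ,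
    Fin.prod_univ_succ]
  have h0 : zeta0 L q Q b = siteWeight L q Q b 0 := by
    simp only [zeta0, siteWeight, Nr1_zero, Fin.val_zero, Nat.cast_zero, add_zero, sub_zero]
    split_ifs <;> first | rfl | omega
  simp only [Fin.val_zero, lt_irrefl, false_and, if_false, mul_one, one_mul, h0, Fin.val_succ,
    Nat.succ_pos, true_and]
  rw [mul_comm]
  congr 1
  refine Finset.prod_congr rfl fun i _ => ?_
  simp only [siteWeight]
  split_ifs <;> simp_all

theorem Nr1_update (b : Conf L) (j s : Fin (L + 1)) :
    Nr1 L b s = Nr1 L (Function.update b j 1) s + if s < j ∧ b j = 2 then 1 else 0 := by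
  simp only [Nr1, card_filter]
  have hrest : ∑ y ∈ univ.erase j, (if s < y ∧ Function.update b j 1 y = 2 then 1 else 0) =
      ∑ y ∈ univ.erase j, (if s < y ∧ b y = 2 then 1 else 0) :=
    sum_congr rfl fun y hy => by rw [Function.update_of_ne (ne_of_mem_erase hy)]
  rw [← add_sum_erase _ _ (mem_univ j), ← add_sum_erase _ _ (mem_univ j), hrest,
    Function.update_self]
  simp only [Fin.reduceEq, and_false, if_false, zero_add]
  rw [add_comm]

theorem siteWeight_update (hq : q ≠ 0) (b : Conf L) {j s : Fin (L + 1)} (hs : s ≠ j) :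
    siteWeight L q Q b s =
      (if s < j ∧ b j = 2 ∧ b s ≠ 1 then q⁻¹ else 1) *
        siteWeight L q Q (Function.update b j 1) s := by
  rw [siteWeight, siteWeight, Function.update_of_ne hs, Nr1_update b j s]
  by_cases hshift : s < j ∧ b j = 2
  · simp only [hshift, and_self, if_true, Nat.cast_add, Nat.cast_one, ← sub_sub, zpow_sub_one₀ hq]
    split_ifs <;> simp_all [mul_comm, mul_left_comm]; omega
  · have hnot : ¬(s < j ∧ b j = 2 ∧ b s ≠ 1) := fun h => hshift ⟨h.1, h.2.1⟩
    simp [hshift, hnot]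

theorem prod_siteWeight_update (hq : q ≠ 0) (b : Conf L) (j : Fin (L + 1)) :
    ∏ s, siteWeight L q Q b s =
      siteWeight L q Q b j * q ^ (-(#{s ∈ Iio j | b j = 2 ∧ b s ≠ 1} : ℤ)) *
        ∏ s, siteWeight L q Q (Function.update b j 1) s := by
  have hj : siteWeight L q Q (Function.update b j 1) j = 1 := by simp [siteWeight]
  have hset : {s ∈ univ.erase j | s < j ∧ b j = 2 ∧ b s ≠ 1} = {s ∈ Iio j | b j = 2 ∧ b s ≠ 1} := by
    ext s
    simp only [mem_filter, mem_erase, mem_univ, mem_Iio]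
    exact ⟨fun h => h.2, fun h => ⟨⟨h.1.ne, trivial⟩, h⟩⟩
  rw [← mul_prod_erase _ _ (mem_univ j), ← mul_prod_erase univ _ (mem_univ j), hj, one_mul,
    prod_congr rfl fun s hs => siteWeight_update hq b (ne_of_mem_erase hs), prod_mul_distrib,
    prod_ite, prod_const, prod_const_one, mul_one, hset, _root_.zpow_neg, zpow_natCast, inv_pow,
    mul_assoc]

end Weights

section HopCoefficient

variable {L : ℕ} {q Q : ℝ}

theorem prod_Kmat_inv_apply_self (hq : q ≠ 0) (b : Conf L) (S : Finset (Fin (L + 1))) :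
    ∏ s ∈ S, (Kmat q)⁻¹ (b s) (b s) = q ^ ((#{s ∈ S | b s = 1} : ℤ) - #{s ∈ S | b s = 0}) := by
  simp_rw [Kmat_inv_apply_self hq, prod_zpow_eq_zpow_sum hq S, sum_comp_fin_three S b]
  congr 1
  simp only [nsmul_eq_mul, Matrix.cons_val]
  ring

theorem prod_kmat_apply_self (hq : q ≠ 0) (b : Conf L) (S : Finset (Fin (L + 1))) :
    ∏ s ∈ S, kmat q (b s) (b s) =
      q ^ (2 * (#{s ∈ S | b s = 1} : ℤ) - #{s ∈ S | b s = 0} - #{s ∈ S | b s = 2}) := by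
  simp_rw [kmat_apply_self, prod_zpow_eq_zpow_sum hq S, sum_comp_fin_three S b]
  congr 1
  simp only [nsmul_eq_mul, Matrix.cons_val]
  ring

theorem Nr1_eq_card_filter_Ioi (b : Conf L) (j : Fin (L + 1)) :
    Nr1 L b j = #{s ∈ Ioi j | b s = 2} := by
  rw [Nr1, ← filter_lt_eq_Ioi, filter_filter]

def hopSet (b : Conf L) (j : Fin (L + 1)) : Finset (Fin (L + 1)) :=
  {s ∈ Ioi j | b s = 0} ∪ {s ∈ Iio j | b j = 2 ∧ b s ≠ 1}

theorem hopCoeff_eq (hq : q ≠ 0) (b : Conf L) {j : Fin (L + 1)} (hbj : b j ≠ 1) :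
    hopCoeff L q Q b j =
      q ^ (-(2 * #(hopSet b j) : ℤ)) *
        (siteWeight L q Q b j * q ^ (-(#{s ∈ Iio j | b j = 2 ∧ b s ≠ 1} : ℤ))) := by
  have hright := card_eq_add_card_filter_fin_three (Ioi j) b
  have hleft := card_eq_add_card_filter_fin_three (Iio j) b
  have hleft_ne : #{s ∈ Iio j | b s ≠ 1} = #{s ∈ Iio j | b s = 0} + #{s ∈ Iio j | b s = 2} := by
    rw [card_filter]
    simpa using sum_comp_fin_three (Iio j) b fun a => if a = 1 then (0 : ℕ) else 1
  have hhop : #(hopSet b j) = #{s ∈ Ioi j | b s = 0} + #{s ∈ Iio j | b j = 2 ∧ b s ≠ 1} :=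
    card_union_of_disjoint (disjoint_filter_filter (disjoint_Ioi_Iio j))
  rw [Fin.card_Ioi] at hright
  rw [Fin.card_Iio] at hleft
  have hjL := j.is_le
  rw [hhop, hopCoeff, prod_Kmat_inv_apply_self hq, prod_kmat_apply_self hq, siteWeight,
    Nr1_eq_card_filter_Ioi]
  rcases (show b j = 0 ∨ b j = 2 by omega) with hbj | hbj
  · simp only [hbj, Emat, Fmat, and_self, if_true, Fin.reduceEq, false_and, if_false, filter_false,
      card_empty, mul_zero, add_zero, zero_mul, CharP.cast_eq_zero, neg_zero, zpow_zero, mul_one,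
      one_mul]
    rw [← zpow_add₀ hq]
    congr 1
    omega
  · simp only [hbj, Emat, Fmat, if_true, Fin.reduceEq, false_and, if_false, true_and, zero_add,
      mul_one]
    rw [hleft_ne, mul_assoc, ← zpow_add₀ hq, mul_left_comm, mul_assoc, ← zpow_add₀ hq,
      ← zpow_add₀ hq]
    congr 2
    push_cast
    omega

end HopCoefficient

section HopIndex

variable {L : ℕ}

def nonzeroSites (b : Conf L) : Finset (Fin (L + 1)) := {s | b s ≠ 1}

@[simp]
theorem mem_nonzeroSites {b : Conf L} {s : Fin (L + 1)} : s ∈ nonzeroSites b ↔ b s ≠ 1 := by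
  simp [nonzeroSites]

theorem card_nonzeroSites (b : Conf L) : #(nonzeroSites b) = dtot L b := rfl

theorem self_notMem_hopSet (b : Conf L) (j : Fin (L + 1)) : j ∉ hopSet b j := by
  simp [hopSet]

theorem hopSet_subset (b : Conf L) (j : Fin (L + 1)) : hopSet b j ⊆ nonzeroSites b := by
  intro s hs
  simp only [hopSet, mem_union, mem_filter] at hs
  rcases hs with ⟨-, hs⟩ | ⟨-, -, hs⟩ <;> simp [hs]

/-- Nonzero sites `x < y` have strictly nested hop sets: `hopSet y ⊂ hopSet x` if `b y = -1`,
and `hopSet x ⊂ hopSet y` if `b y = 1`. -/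
theorem card_hopSet_ne_of_lt (b : Conf L) {x y : Fin (L + 1)} (hx : b x ≠ 1) (hy : b y ≠ 1)
    (hxy : x < y) : #(hopSet b x) ≠ #(hopSet b y) := by
  rcases (show b y = 0 ∨ b y = 2 by omega) with hy | hy
  · refine (card_lt_card ((ssubset_iff_of_subset fun s hs => ?_).2
      ⟨y, ?_, self_notMem_hopSet b y⟩)).ne'
    · simp only [hopSet, hy, mem_union, mem_filter, mem_Ioi, mem_Iio, Fin.reduceEq, false_and,
        and_false, or_false] at hs ⊢
      exact Or.inl ⟨hxy.trans hs.1, hs.2⟩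
    · simp [hopSet, hxy, hy]
  · refine (card_lt_card ((ssubset_iff_of_subset fun s hs => ?_).2
      ⟨x, ?_, self_notMem_hopSet b x⟩)).ne
    · simp only [hopSet, hy, mem_union, mem_filter, mem_Ioi, mem_Iio, true_and] at hs ⊢
      rcases hs with ⟨hs, hs0⟩ | ⟨hs, -, hs1⟩
      · rcases lt_trichotomy s y with h | rfl | h
        · exact Or.inr ⟨h, by simp [hs0]⟩
        · simp [hy] at hs0
        · exact Or.inl ⟨h, hs0⟩
      · exact Or.inr ⟨hs.trans hxy, hs1⟩
    · simp [hopSet, hxy, hy, hx]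

theorem sum_nonzero_hopSet (b : Conf L) {M : Type*} [AddCommMonoid M] (f : ℕ → M) :
    ∑ j ∈ nonzeroSites b, f #(hopSet b j) = ∑ i ∈ range (dtot L b), f i := by
  have hinj : Set.InjOn (fun j => #(hopSet b j)) (nonzeroSites b) := by
    intro x hx y hy hxy
    rw [mem_coe, mem_nonzeroSites] at hx hy
    by_contra hne
    rcases lt_or_gt_of_ne hne with h | h
    exacts [card_hopSet_ne_of_lt b hx hy h hxy, card_hopSet_ne_of_lt b hy hx h hxy.symm]
  have himage : image (fun j => #(hopSet b j)) (nonzeroSites b) = range (dtot L b) := by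
    refine eq_of_subset_of_card_le (fun i hi => ?_) ?_
    · obtain ⟨j, hj, rfl⟩ := mem_image.1 hi
      exact mem_range.2 (card_lt_card ((ssubset_iff_of_subset (hopSet_subset b j)).2
        ⟨j, hj, self_notMem_hopSet b j⟩))
    · rw [card_range, card_image_of_injOn hinj, card_nonzeroSites]
  rw [← himage, sum_image hinj]

end HopIndex

section GeometricSum

variable {q : ℝ}

theorem qInt_eq_geom_sum (hq2 : q ^ 2 ≠ 1) (n : ℕ) : qInt q n = ∑ i ∈ range n, (q ^ 2) ^ i := by
  rw [geom_sum_eq hq2, qInt, pow_mul, ← neg_div_neg_eq, neg_sub, neg_sub]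

theorem sum_range_zpow_neg_two_mul (hq : q ≠ 0) (hq2 : q ^ 2 ≠ 1) (n : ℕ) :
    ∑ i ∈ range (n + 1), q ^ (-(2 * i : ℤ)) = q ^ (-(2 * n : ℤ)) * qInt q (n + 1) := by
  rw [qInt_eq_geom_sum hq2, mul_sum, ← sum_range_reflect]
  refine sum_congr rfl fun i hi => ?_
  have hin : i ≤ n := Nat.lt_succ_iff.1 (mem_range.1 hi)
  rw [← pow_mul, ← zpow_natCast, ← zpow_add₀ hq, add_tsub_cancel_right]
  congr 1
  push_cast [Nat.cast_sub hin]
  ring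

end GeometricSum

section Descent

variable {L : ℕ} {q Q : ℝ}

theorem dtot_update_add_one (b : Conf L) {j : Fin (L + 1)} (hbj : b j ≠ 1) :
    dtot L (Function.update b j 1) + 1 = dtot L b := by
  have herase : nonzeroSites (Function.update b j 1) = (nonzeroSites b).erase j := by
    ext s
    by_cases hs : s = j <;> simp [hs]
  rw [← card_nonzeroSites, ← card_nonzeroSites, herase,
    card_erase_add_one (mem_nonzeroSites.2 hbj)]

theorem hopCoeff_of_eq_one (b : Conf L) {j : Fin (L + 1)} (hbj : b j = 1) :
    hopCoeff L q Q b j = 0 := by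
  simp [hopCoeff, Emat, Fmat, hbj]

theorem hopCoeff_mul_Gfun_update (hq : q ≠ 0) (b : Conf L) {j : Fin (L + 1)} (hbj : b j ≠ 1) :
    hopCoeff L q Q b j * Gfun L q Q (Function.update b j 1) =
      q ^ (-(2 * #(hopSet b j) : ℤ)) * Gfun L q Q b := by
  rw [hopCoeff_eq hq b hbj, Gfun_eq_prod_siteWeight, Gfun_eq_prod_siteWeight,
    prod_siteWeight_update hq b j, mul_assoc]

theorem sum_hopCoeff_mul_Gfun_update (hq : q ≠ 0) (b : Conf L) :
    ∑ j ∈ nonzeroSites b, hopCoeff L q Q b j * Gfun L q Q (Function.update b j 1) =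
      (∑ i ∈ range (dtot L b), q ^ (-(2 * i : ℤ))) * Gfun L q Q b := by
  rw [sum_congr rfl fun j hj => hopCoeff_mul_Gfun_update hq b (mem_nonzeroSites.1 hj), ← sum_mul,
    sum_nonzero_hopSet b fun i => q ^ (-(2 * i : ℤ))]

def FtotPowVec (L : ℕ) (q Q : ℝ) (d : ℕ) : Conf L → ℝ := fun b =>
  if dtot L b = d then q ^ (-((d : ℤ) * ((d : ℤ) - 1))) * qFact q d * Gfun L q Q b else 0

theorem Omega_eq_FtotPowVec_zero : Omega L = FtotPowVec L q Q 0 := by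
  funext b
  by_cases hb : b = fun _ => 1
  · subst hb
    simp [Omega, FtotPowVec, dtot, qFact, Gfun_eq_prod_siteWeight, siteWeight]
  · obtain ⟨s, hs⟩ := Function.ne_iff.1 hb
    have hdtot : dtot L b ≠ 0 := by
      rw [← card_nonzeroSites]
      exact card_ne_zero_of_mem (mem_nonzeroSites.2 hs)
    simp [Omega, FtotPowVec, hb, hdtot]

theorem Ftot_mulVec_FtotPowVec (hq : q ≠ 0) (hq2 : q ^ 2 ≠ 1) (d : ℕ) :
    Ftot L q Q *ᵥ FtotPowVec L q Q d = FtotPowVec L q Q (d + 1) := by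
  funext b
  rw [Ftot_mulVec_apply, ← sum_subset (subset_univ (nonzeroSites b)) fun j _ hj => by
    rw [hopCoeff_of_eq_one b (by simpa using hj), zero_mul]]
  have hdtot : ∀ j ∈ nonzeroSites b, (dtot L (Function.update b j 1) = d ↔ dtot L b = d + 1) :=
    fun j hj => by have := dtot_update_add_one b (mem_nonzeroSites.1 hj); omega
  by_cases hd : dtot L b = d + 1
  · have hterm : ∀ j ∈ nonzeroSites b,
        hopCoeff L q Q b j * FtotPowVec L q Q d (Function.update b j 1) =
          q ^ (-((d : ℤ) * ((d : ℤ) - 1))) * qFact q d *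
            (hopCoeff L q Q b j * Gfun L q Q (Function.update b j 1)) := fun j hj => by
      rw [FtotPowVec, if_pos ((hdtot j hj).2 hd)]
      ring
    have hexp : q ^ (-((d : ℤ) * ((d : ℤ) - 1))) * q ^ (-(2 * d : ℤ)) =
        q ^ (-(((d + 1 : ℕ) : ℤ) * (((d + 1 : ℕ) : ℤ) - 1))) := by
      rw [← zpow_add₀ hq]
      push_cast
      ring_nf
    rw [sum_congr rfl hterm, ← mul_sum, sum_hopCoeff_mul_Gfun_update hq, hd,
      sum_range_zpow_neg_two_mul hq hq2, FtotPowVec, if_pos hd, qFact, ← hexp]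
    ring
  · rw [FtotPowVec, if_neg hd]
    refine sum_eq_zero fun j hj => ?_
    rw [FtotPowVec, if_neg (mt (hdtot j hj).1 hd), mul_zero]

end Descent

theorem Ftot_pow_coefficients_general (L : ℕ)
    (q Q : ℝ) (hq0 : 0 < q) (hq1 : q < 1)
    (d : ℕ) (b : Conf L) :
    ((Ftot L q Q) ^ d *ᵥ Omega L) b =
      if dtot L b = d then
        q ^ (-((d : ℤ) * ((d : ℤ) - 1))) * qFact q d * Gfun L q Q b
      else 0 := by
  have hq : q ≠ 0 := hq0.ne'
  have hq2 : q ^ 2 ≠ 1 := (pow_lt_one₀ hq0.le hq1 two_ne_zero).ne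
  suffices Ftot L q Q ^ d *ᵥ Omega L = FtotPowVec L q Q d from congrFun this b
  induction d with
  | zero => rw [pow_zero, one_mulVec, Omega_eq_FtotPowVec_zero]
  | succ n ih => rw [pow_succ', ← mulVec_mulVec, ih, Ftot_mulVec_FtotPowVec hq hq2]

/-- **Coefficients of `F_tot^d Ω`** (Proposition in the proof of Theorem 1.3):
the coefficient of the tensor basis vector `c_b` in `F_tot^d Ω` is `0` unless
`d(b) = d`, in which case it equals `q^{−d(d−1)} [d]_{q²}! G(b)`. -/
theorem Ftot_pow_coefficients (L : ℕ) (hL : 1 ≤ L)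
    (q Q : ℝ) (hq0 : 0 < q) (hq1 : q < 1) (hQ0 : 0 < Q) (hQ1 : Q < 1)
    (d : ℕ) (b : Conf L) :
    ((Ftot L q Q) ^ d *ᵥ Omega L) b =
      if dtot L b = d then
        q ^ (-((d : ℤ) * ((d : ℤ) - 1))) * qFact q d * Gfun L q Q b
      else 0 :=
  Ftot_pow_coefficients_general L q Q hq0 hq1 d b

end Stmt7

end
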